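/- Let α > 0, β ∈ ℝ, let w be the normalized pure Fisher–Hartwig weight with parameters α, β, and let (φ_n) be a system of orthonormal polynomials for w. For each n ≥ 0 define I_n = ∫_0^{2π} φ_n(ξ)·conj(φ_n*(ξ))·w(ξ) dθ and J_n = ∫_0^{2π} [φ_n(ξ)·conj(φ_n*(ξ))/(1−ξ)]·w(ξ) dθ, where ξ = e^{iθ}. Then I_n = r_n and J_n = (α + iβ − n)·r_n/(2α). -/

import Mathlib

open Complex Polynomial

noncomputable def uc (θ : ℝ) : ℂ := Complex.exp (θ * Complex.I)

noncomputable def starRev (p : Polynomial ℂ) : Polynomial ℂ :=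
  (p.map (starRingEnd ℂ)).reverse

noncomputable def kC (φ : ℕ → Polynomial ℂ) (n : ℕ) : ℂ := (φ n).leadingCoeff

noncomputable def rC (φ : ℕ → Polynomial ℂ) (n : ℕ) : ℂ := (φ n).coeff 0 / kC φ n

noncomputable def mC (φ : ℕ → Polynomial ℂ) (n : ℕ) : ℂ := kC φ n / kC φ (n+1)

noncomputable def sC (φ : ℕ → Polynomial ℂ) (n : ℕ) : ℂ := rC φ (n+1) / rC φ n

/-- A system of orthonormal polynomials on the unit circle for the weight `w`:
degree of `φ n` is `n`, leading coefficient real and positive, orthonormality. -/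
def OPS (w : ℝ → ℂ) (φ : ℕ → Polynomial ℂ) : Prop :=
  (∀ n : ℕ, (φ n).degree = n) ∧
  (∀ n : ℕ, ∃ c : ℝ, 0 < c ∧ (φ n).leadingCoeff = (c : ℂ)) ∧
  (∀ m n : ℕ, (∫ θ in (0:ℝ)..(2 * Real.pi),
      (φ m).eval (uc θ) * (starRingEnd ℂ) ((φ n).eval (uc θ)) * w θ)
    = if m = n then 1 else 0)

/-- Normalisation constant of the pure Fisher-Hartwig weight. -/
noncomputable def FHC (α β : ℝ) : ℂ :=
  Complex.Gamma (1 + (α : ℂ) + (β : ℂ) * Complex.I) *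
    Complex.Gamma (1 + (α : ℂ) - (β : ℂ) * Complex.I) /
    (2 * (Real.pi : ℂ) * Complex.Gamma (1 + 2 * (α : ℂ)))

/-- The normalized pure Fisher-Hartwig weight on the unit circle. -/
noncomputable def FHw (α β : ℝ) (θ : ℝ) : ℂ :=
  FHC α β * (((2 * Real.sin (θ / 2)) ^ (2 * α) : ℝ) : ℂ) *
    ((Real.exp (-β * (θ - Real.pi)) : ℝ) : ℂ)

/-!
On the unit circle `conj (φₙ*(ξ)) = ξ⁻ⁿ φₙ(ξ)`, and for `deg Q ≤ n` the orthogonality relations give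
`∫ Q(ξ) ξ⁻ⁿ φₙ(ξ) w dθ = Q(0) / kₙ`; with `Q = φₙ` this is `Iₙ = rₙ`.

For `Jₙ`, write `1 / (1 - ξ) = 1/2 + (i/2) cot (θ/2)` and use `w' = (α cot (θ/2) - β) w`:
then `Jₙ` is a combination of `Iₙ` and `∫ g w'`, where `g(θ) = φₙ(ξ)² ξ⁻ⁿ`. As `α > 0`, `w`
vanishes at `θ = 0, 2π` and `|w'| ≲ (2 sin (θ/2))^(2α-1)` is integrable, so integration by parts
gives `∫ g w' = -∫ g' w`. Finally `g' = i (2ξφₙ' - nφₙ)(ξ) ξ⁻ⁿ φₙ(ξ)` is again of the first form,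
whence `∫ g w' = i n rₙ`.
-/

open MeasureTheory Set

lemma Polynomial.eval_inv_reflect {K : Type*} [Field K] {z : K} (hz : z ≠ 0) {p : K[X]}
    {N : ℕ} (hp : p.natDegree ≤ N) : (p.reflect N).eval z⁻¹ = z⁻¹ ^ N * p.eval z := by
  let := invertibleOfNonzero hz
  have h := eval₂_reflect_mul_pow (RingHom.id K) z N p hp
  rw [invOf_eq_inv] at h
  rw [eval, eval, ← h, mul_left_comm, ← mul_pow, inv_mul_cancel₀ hz, one_pow, mul_one]

lemma Polynomial.natDegree_X_mul_derivative_le {R : Type*} [Semiring R] (p : R[X]) :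
    (X * derivative p).natDegree ≤ p.natDegree := by
  rcases eq_or_ne p.natDegree 0 with h | h
  · rw [eq_C_of_natDegree_eq_zero h]
    simp
  · have := natDegree_derivative_lt h
    have := natDegree_X_le (R := R)
    exact natDegree_mul_le.trans (by omega)

lemma uc_ne_zero (θ : ℝ) : uc θ ≠ 0 := Complex.exp_ne_zero _

lemma conj_uc (θ : ℝ) : starRingEnd ℂ (uc θ) = (uc θ)⁻¹ := by
  rw [uc, ← Complex.exp_conj, ← Complex.exp_neg]
  simp [Complex.conj_I]

@[fun_prop]
lemma continuous_uc : Continuous uc := by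
  unfold uc; fun_prop

lemma hasDerivAt_uc (θ : ℝ) : HasDerivAt uc (uc θ * I) θ := by
  have h : HasDerivAt (fun t : ℝ => (t : ℂ) * I) I θ := by
    simpa using (hasDerivAt_id θ).ofReal_comp.mul_const I
  exact h.cexp

lemma uc_inv_pow (n : ℕ) (θ : ℝ) : (uc θ)⁻¹ ^ n = uc (-n * θ) := by
  rw [uc, uc, ← Complex.exp_neg, ← Complex.exp_nat_mul]
  push_cast
  ring_nf

lemma one_sub_uc_ne_zero {θ : ℝ} (h : Real.sin (θ / 2) ≠ 0) : 1 - uc θ ≠ 0 := by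
  rw [sub_ne_zero, ne_comm, uc, Ne, Complex.exp_eq_one_iff]
  rintro ⟨k, hk⟩
  have hθ : θ / 2 = k * Real.pi := by
    have := congrArg Complex.im hk
    simp at this
    linarith
  exact h (hθ ▸ Real.sin_int_mul_pi k)

lemma inv_one_sub_uc {θ : ℝ} (h : Real.sin (θ / 2) ≠ 0) :
    (1 - uc θ)⁻¹ = 1 / 2 + I * Real.cot (θ / 2) / 2 := by
  have h2 : 2 * I * ((θ / 2 : ℝ) : ℂ) = θ * I := by push_cast; ring
  have hne := one_sub_uc_ne_zero h
  rw [Complex.ofReal_cot, Complex.cot_eq_exp_ratio, h2, ← uc]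
  field_simp
  ring

lemma conj_eval_uc_reflect_map_conj {p : ℂ[X]} {N : ℕ} (hp : p.natDegree ≤ N) (θ : ℝ) :
    starRingEnd ℂ ((reflect N (p.map (starRingEnd ℂ))).eval (uc θ))
      = (uc θ)⁻¹ ^ N * p.eval (uc θ) := by
  rw [← Polynomial.eval_inv_reflect (uc_ne_zero θ) hp, ← conj_uc, ← eval₂_hom,
    reflect_map, eval₂_map, eval]
  congr
  ext; simp

lemma conj_eval_uc_starRev (p : ℂ[X]) (θ : ℝ) :
    starRingEnd ℂ ((starRev p).eval (uc θ)) = (uc θ)⁻¹ ^ p.natDegree * p.eval (uc θ) := by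
  rw [starRev, reverse, natDegree_map_eq_of_injective (starRingEnd ℂ).injective p]
  exact conj_eval_uc_reflect_map_conj le_rfl θ

lemma hasDerivAt_eval_uc_mul_uc_inv_pow (R : ℂ[X]) (n : ℕ) (θ : ℝ) :
    HasDerivAt (fun t => R.eval (uc t) * (uc t)⁻¹ ^ n)
      (I * ((X * derivative R - C (n : ℂ) * R).eval (uc θ) * (uc θ)⁻¹ ^ n)) θ := by
  have hR := (R.hasDerivAt (uc θ)).comp θ (hasDerivAt_uc θ)
  have hpow := (hasDerivAt_uc (-n * θ)).scomp θ ((hasDerivAt_id' θ).const_mul (-n : ℝ))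
  convert hR.mul hpow using 1
  · rfl
  · funext t
    rw [Pi.mul_apply, Function.comp_apply, Function.comp_apply, uc_inv_pow]
  · simp only [eval_sub, eval_mul, eval_X, eval_C, Function.comp_apply, Complex.real_smul,
      uc_inv_pow]
    push_cast
    ring

lemma intervalIntegrable_two_mul_sin_half_rpow_zero_pi {e : ℝ} (he : -1 < e) :
    IntervalIntegrable (fun θ => (2 * Real.sin (θ / 2)) ^ e) volume 0 Real.pi := by
  rcases le_or_gt 0 e with he0 | he0
  · exact ((Real.continuous_rpow_const he0).comp (by fun_prop)).intervalIntegrable _ _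
  refine ((intervalIntegral.intervalIntegrable_rpow' he).const_mul ((2 / Real.pi) ^ e)).mono_fun'
    (Measurable.aestronglyMeasurable (by fun_prop)) ?_
  rw [uIoc_of_le Real.pi_pos.le]
  refine (ae_restrict_iff' measurableSet_Ioc).2 (.of_forall fun θ ⟨h0, hπ⟩ => ?_)
  have hJordan : 2 / Real.pi * θ ≤ 2 * Real.sin (θ / 2) := by
    have := Real.mul_le_sin (x := θ / 2) (by linarith) (by linarith)
    linarith
  have hpos : 0 < 2 / Real.pi * θ := by have := Real.pi_pos; positivity
  dsimp only
  rw [Real.norm_eq_abs, abs_of_nonneg (Real.rpow_nonneg (hpos.le.trans hJordan) _),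
    ← Real.mul_rpow (by positivity) h0.le]
  exact Real.rpow_le_rpow_of_nonpos hpos hJordan he0.le

lemma intervalIntegrable_two_mul_sin_half_rpow {e : ℝ} (he : -1 < e) :
    IntervalIntegrable (fun θ => (2 * Real.sin (θ / 2)) ^ e) volume 0 (2 * Real.pi) := by
  have hleft := intervalIntegrable_two_mul_sin_half_rpow_zero_pi he
  have hright := hleft.comp_sub_left (2 * Real.pi)
  have hsymm : ∀ θ, Real.sin ((2 * Real.pi - θ) / 2) = Real.sin (θ / 2) := fun θ => by
    rw [show (2 * Real.pi - θ) / 2 = Real.pi - θ / 2 by ring, Real.sin_pi_sub]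
  simp only [hsymm, sub_zero, show 2 * Real.pi - Real.pi = Real.pi by ring] at hright
  exact hleft.trans hright.symm

noncomputable def circlePairing (w : ℝ → ℂ) (p q : ℂ[X]) : ℂ :=
  ∫ θ in (0:ℝ)..(2 * Real.pi), p.eval (uc θ) * starRingEnd ℂ (q.eval (uc θ)) * w θ

section Pairing

variable {w : ℝ → ℂ} {φ : ℕ → ℂ[X]}

lemma circlePairing_add_right (hw : IntervalIntegrable w volume 0 (2 * Real.pi))
    (p q r : ℂ[X]) : circlePairing w p (q + r) = circlePairing w p q + circlePairing w p r := by
  have hint : ∀ s : ℂ[X], IntervalIntegrable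
      (fun θ => p.eval (uc θ) * starRingEnd ℂ (s.eval (uc θ)) * w θ) volume 0 (2 * Real.pi) :=
    fun s => hw.continuousOn_mul (by fun_prop)
  simp only [circlePairing, eval_add, map_add, mul_add, add_mul]
  exact intervalIntegral.integral_add (hint q) (hint r)

lemma circlePairing_C_mul_right (p q : ℂ[X]) (c : ℂ) :
    circlePairing w p (C c * q) = starRingEnd ℂ c * circlePairing w p q := by
  simp only [circlePairing, eval_mul, eval_C, map_mul, ← intervalIntegral.integral_const_mul]
  congr 1; funext θ; ring

lemma OPS.natDegree_eq (hφ : OPS w φ) (n : ℕ) : (φ n).natDegree = n :=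
  natDegree_eq_of_degree_eq_some (hφ.1 n)

lemma OPS.kC_ne_zero (hφ : OPS w φ) (n : ℕ) : kC φ n ≠ 0 := by
  obtain ⟨c, hc, hk⟩ := hφ.2.1 n
  rw [kC, hk]
  exact_mod_cast hc.ne'

lemma OPS.conj_kC (hφ : OPS w φ) (n : ℕ) : starRingEnd ℂ (kC φ n) = kC φ n := by
  obtain ⟨c, -, hk⟩ := hφ.2.1 n
  rw [kC, hk, Complex.conj_ofReal]

lemma OPS.circlePairing_eq_zero_of_degree_lt (hw : IntervalIntegrable w volume 0 (2 * Real.pi))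
    (hφ : OPS w φ) {n : ℕ} (q : ℂ[X]) (hq : q.degree < n) : circlePairing w (φ n) q = 0 := by
  induction q using degree_lt_wf.induction with
  | _ q ih =>
  rcases eq_or_ne q 0 with rfl | hq0
  · simp [circlePairing]
  set d := q.natDegree
  -- subtract the multiple of `φ d` with the same leading term
  set c := q.leadingCoeff / kC φ d
  have hd : d ≠ n := by
    have := natDegree_lt_iff_degree_lt hq0 |>.2 hq
    omega
  have hlead : (C c * φ d).leadingCoeff = q.leadingCoeff := by
    rw [leadingCoeff_mul, leadingCoeff_C]
    exact div_mul_cancel₀ _ (hφ.kC_ne_zero d)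
  have hdeg : (C c * φ d).degree = q.degree := by
    rw [degree_C_mul (by simpa [c, hφ.kC_ne_zero d] using hq0), hφ.1 d, degree_eq_natDegree hq0]
  have hlt : (q - C c * φ d).degree < q.degree := degree_sub_lt_left hdeg.symm hq0 hlead.symm
  rw [← sub_add_cancel q (C c * φ d), circlePairing_add_right hw, circlePairing_C_mul_right,
    ih _ hlt (hlt.trans hq), circlePairing, hφ.2.2, if_neg (Ne.symm hd)]
  simp

lemma OPS.circlePairing_eq_of_natDegree_le (hw : IntervalIntegrable w volume 0 (2 * Real.pi))
    (hφ : OPS w φ) {n : ℕ} (q : ℂ[X]) (hq : q.natDegree ≤ n) :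
    circlePairing w (φ n) q = starRingEnd ℂ (q.coeff n) / kC φ n := by
  set c := q.coeff n / kC φ n
  have hlt : (q - C c * φ n).degree < n := by
    rw [degree_lt_iff_coeff_zero]
    intro m hm
    rw [coeff_sub, coeff_C_mul]
    rcases hm.eq_or_lt with h | hm
    · subst h
      have hk : (φ n).coeff n = kC φ n := by rw [kC, leadingCoeff, hφ.natDegree_eq]
      rw [hk, div_mul_cancel₀ _ (hφ.kC_ne_zero n), sub_self]
    · rw [coeff_eq_zero_of_natDegree_lt (hq.trans_lt hm),
        coeff_eq_zero_of_natDegree_lt ((hφ.natDegree_eq n).trans_lt hm)]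
      ring
  conv_lhs => rw [← sub_add_cancel q (C c * φ n)]
  rw [circlePairing_add_right hw, hφ.circlePairing_eq_zero_of_degree_lt hw _ hlt,
    circlePairing_C_mul_right, circlePairing, hφ.2.2, if_pos rfl, map_div₀, hφ.conj_kC]
  ring

lemma OPS.integral_eval_mul_mul_uc_inv_pow
    (hw : IntervalIntegrable w volume 0 (2 * Real.pi)) (hφ : OPS w φ) {n : ℕ} (Q : ℂ[X])
    (hQ : Q.natDegree ≤ n) :
    ∫ θ in (0:ℝ)..(2 * Real.pi), (Q * φ n).eval (uc θ) * (uc θ)⁻¹ ^ n * w θ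
      = Q.coeff 0 / kC φ n := by
  -- on the circle `Q(ξ) ξ⁻ⁿ = conj (R(ξ))`, and the `Xⁿ`-coefficient of `R` is `conj (Q 0)`
  set R := reflect n (Q.map (starRingEnd ℂ))
  have hR : R.natDegree ≤ n := natDegree_reflect_le.trans (by
    rw [natDegree_map_eq_of_injective (starRingEnd ℂ).injective]; omega)
  have h : (∫ θ in (0:ℝ)..(2 * Real.pi), (Q * φ n).eval (uc θ) * (uc θ)⁻¹ ^ n * w θ)
      = circlePairing w (φ n) R := by
    unfold circlePairing
    congr 1; funext θ
    rw [conj_eval_uc_reflect_map_conj hQ, eval_mul]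
    ring
  rw [h, hφ.circlePairing_eq_of_natDegree_le hw _ hR, coeff_reflect, revAt_le le_rfl,
    Nat.sub_self, coeff_map, Complex.conj_conj]

end Pairing

section Weight

variable {α β : ℝ}

lemma FHw_eq_zero_of_sin_eq_zero (hα : 0 < α) {θ : ℝ} (h : Real.sin (θ / 2) = 0) :
    FHw α β θ = 0 := by
  simp [FHw, h, Real.zero_rpow (by positivity : 2 * α ≠ 0)]

lemma continuous_FHw (hα : 0 ≤ α) : Continuous (FHw α β) := by
  have := Real.continuous_rpow_const (by positivity : 0 ≤ 2 * α)
  unfold FHw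
  fun_prop

lemma intervalIntegrable_FHw (hα : 0 ≤ α) : IntervalIntegrable (FHw α β) volume 0 (2 * Real.pi) :=
  (continuous_FHw hα).intervalIntegrable _ _

noncomputable def FHwDeriv (α β θ : ℝ) : ℂ := ((α * Real.cot (θ / 2) - β : ℝ) : ℂ) * FHw α β θ

lemma hasDerivAt_FHw {θ : ℝ} (h : Real.sin (θ / 2) ≠ 0) :
    HasDerivAt (FHw α β) (FHwDeriv α β θ) θ := by
  have hs : 2 * Real.sin (θ / 2) ≠ 0 := mul_ne_zero two_ne_zero h
  have hsin : HasDerivAt (fun t => 2 * Real.sin (t / 2)) (Real.cos (θ / 2)) θ :=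
    (((hasDerivAt_id θ).div_const 2).sin.const_mul 2).congr_deriv (by simp; ring)
  have hexp : HasDerivAt (fun t => Real.exp (-β * (t - Real.pi)))
      (Real.exp (-β * (θ - Real.pi)) * -β) θ := by
    simpa using (((hasDerivAt_id θ).sub_const Real.pi).const_mul (-β)).exp
  have h := (((hsin.rpow_const (p := 2 * α) (Or.inl hs)).mul hexp).ofReal_comp).const_mul (FHC α β)
  convert h using 1
  · rfl
  · funext t; simp [FHw, mul_assoc]
  · rw [FHwDeriv, FHw, Real.cot_eq_cos_div_sin, Real.rpow_sub_one hs]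
    push_cast
    field_simp
    ring

lemma norm_FHwDeriv_le {θ : ℝ} (hθ : θ ∈ Ioo 0 (2 * Real.pi)) :
    ‖FHwDeriv α β θ‖ ≤ ‖FHC α β‖ * (2 * (|α| + |β|)) * Real.exp (|β| * Real.pi) *
      (2 * Real.sin (θ / 2)) ^ (2 * α - 1) := by
  obtain ⟨h0, h2π⟩ := hθ
  have hsin : 0 < Real.sin (θ / 2) :=
    Real.sin_pos_of_pos_of_lt_pi (by linarith) (by linarith)
  have hs : 0 < 2 * Real.sin (θ / 2) := by positivity
  have hreal : (α * Real.cot (θ / 2) - β) * ((2 * Real.sin (θ / 2)) ^ (2 * α)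
      * Real.exp (-β * (θ - Real.pi))) = 2 * (α * Real.cos (θ / 2) - β * Real.sin (θ / 2))
      * Real.exp (-β * (θ - Real.pi)) * (2 * Real.sin (θ / 2)) ^ (2 * α - 1) := by
    rw [Real.rpow_sub_one hs.ne', Real.cot_eq_cos_div_sin]
    field_simp
  have hrepr : FHwDeriv α β θ = FHC α β * ((2 * (α * Real.cos (θ / 2) - β * Real.sin (θ / 2))
      * Real.exp (-β * (θ - Real.pi)) * (2 * Real.sin (θ / 2)) ^ (2 * α - 1) : ℝ) : ℂ) := by
    rw [← hreal, FHwDeriv, FHw]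
    push_cast
    ring
  have htrig : |α * Real.cos (θ / 2) - β * Real.sin (θ / 2)| ≤ |α| + |β| := by
    refine (abs_sub _ _).trans (add_le_add ?_ ?_) <;> rw [abs_mul]
    · exact mul_le_of_le_one_right (abs_nonneg _) (Real.abs_cos_le_one _)
    · exact mul_le_of_le_one_right (abs_nonneg _) (Real.abs_sin_le_one _)
  have hexp : -β * (θ - Real.pi) ≤ |β| * Real.pi := by
    have : |θ - Real.pi| ≤ Real.pi := abs_le.2 ⟨by linarith, by linarith⟩
    calc -β * (θ - Real.pi) ≤ |β| * |θ - Real.pi| := by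
          rw [← abs_neg β, ← abs_mul]; exact le_abs_self _
      _ ≤ |β| * Real.pi := by gcongr
  rw [hrepr, norm_mul, Complex.norm_real, Real.norm_eq_abs, abs_mul, abs_mul, abs_mul, abs_two,
    Real.abs_exp, abs_of_pos (Real.rpow_pos_of_pos hs _), ← mul_assoc]
  refine mul_le_mul_of_nonneg_right ?_ (Real.rpow_nonneg hs.le _)
  rw [mul_assoc ‖FHC α β‖ (2 * (|α| + |β|))]
  gcongr

lemma intervalIntegrable_FHwDeriv (hα : 0 < α) :
    IntervalIntegrable (FHwDeriv α β) volume 0 (2 * Real.pi) := by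
  have hmeas : Measurable (FHwDeriv α β) := by
    have := Real.continuous_rpow_const (by positivity : 0 ≤ 2 * α)
    unfold FHwDeriv FHw
    simp_rw [Real.cot_eq_cos_div_sin]
    fun_prop
  rw [intervalIntegrable_iff_integrableOn_Ioo_of_le (by positivity)]
  refine Integrable.mono' ((intervalIntegrable_iff_integrableOn_Ioo_of_le (by positivity)).1
    ((intervalIntegrable_two_mul_sin_half_rpow (by linarith : -1 < 2 * α - 1)).const_mul
      (‖FHC α β‖ * (2 * (|α| + |β|)) * Real.exp (|β| * Real.pi)))) hmeas.aestronglyMeasurable ?_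
  exact (ae_restrict_iff' measurableSet_Ioo).2 (.of_forall fun θ hθ => norm_FHwDeriv_le hθ)

lemma inv_one_sub_uc_mul_FHw (hα : 0 < α) (θ : ℝ) :
    (1 - uc θ)⁻¹ * FHw α β θ
      = (1 / 2 + I * β / (2 * α)) * FHw α β θ + I / (2 * α) * FHwDeriv α β θ := by
  -- where `ξ = 1` the left side is the junk value `0⁻¹ * 0`; both sides vanish since `w(θ) = 0`
  rcases eq_or_ne (Real.sin (θ / 2)) 0 with h | h
  · simp [FHwDeriv, FHw_eq_zero_of_sin_eq_zero hα h]
  · have hα' : (α : ℂ) ≠ 0 := by exact_mod_cast hα.ne'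
    rw [inv_one_sub_uc h, FHwDeriv]
    push_cast
    field_simp
    ring

lemma integral_mul_FHwDeriv (hα : 0 < α) {g g' : ℝ → ℂ} (hg : ∀ θ, HasDerivAt g (g' θ) θ)
    (hg' : Continuous g') :
    ∫ θ in (0:ℝ)..(2 * Real.pi), g θ * FHwDeriv α β θ
      = -∫ θ in (0:ℝ)..(2 * Real.pi), g' θ * FHw α β θ := by
  have hπ := Real.pi_pos
  have hendpoint : ∀ θ, Real.sin (θ / 2) = 0 → FHw α β θ = 0 :=
    fun _ => FHw_eq_zero_of_sin_eq_zero hα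
  rw [intervalIntegral.integral_mul_deriv_eq_deriv_mul_of_hasDeriv_right
    (continuous_iff_continuousAt.2 fun θ => (hg θ).continuousAt).continuousOn
    (continuous_FHw hα.le).continuousOn (fun θ _ => (hg θ).hasDerivWithinAt)
    (fun θ hθ => (hasDerivAt_FHw ?_).hasDerivWithinAt) (hg'.intervalIntegrable _ _)
    (intervalIntegrable_FHwDeriv hα), hendpoint 0 (by simp), hendpoint (2 * Real.pi) (by simp)]
  · simp
  · rw [min_eq_left (by positivity), max_eq_right (by positivity)] at hθ
    exact (Real.sin_pos_of_pos_of_lt_pi (by linarith [hθ.1]) (by linarith [hθ.2])).ne'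

lemma integral_div_one_sub_uc_mul_FHw (hα : 0 < α) {g : ℝ → ℂ} (hg : Continuous g) :
    ∫ θ in (0:ℝ)..(2 * Real.pi), g θ / (1 - uc θ) * FHw α β θ
      = (1 / 2 + I * β / (2 * α)) * (∫ θ in (0:ℝ)..(2 * Real.pi), g θ * FHw α β θ)
        + I / (2 * α) * ∫ θ in (0:ℝ)..(2 * Real.pi), g θ * FHwDeriv α β θ := by
  rw [← intervalIntegral.integral_const_mul, ← intervalIntegral.integral_const_mul,
    ← intervalIntegral.integral_add
      (((intervalIntegrable_FHw hα.le).continuousOn_mul hg.continuousOn).const_mul _)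
      (((intervalIntegrable_FHwDeriv hα).continuousOn_mul hg.continuousOn).const_mul _)]
  congr 1
  funext θ
  rw [div_eq_mul_inv, mul_assoc, inv_one_sub_uc_mul_FHw hα]
  ring

lemma OPS.integral_eval_mul_self_mul_FHwDeriv (hα : 0 < α) {φ : ℕ → ℂ[X]}
    (hφ : OPS (FHw α β) φ) (n : ℕ) :
    ∫ θ in (0:ℝ)..(2 * Real.pi), (φ n * φ n).eval (uc θ) * (uc θ)⁻¹ ^ n * FHwDeriv α β θ
      = I * n * rC φ n := by
  have hQ : X * derivative (φ n * φ n) - C (n : ℂ) * (φ n * φ n)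
      = (C 2 * (X * derivative (φ n)) - C (n : ℂ) * φ n) * φ n := by
    rw [derivative_mul, C_ofNat]; ring
  have hQdeg : (C 2 * (X * derivative (φ n)) - C (n : ℂ) * φ n).natDegree ≤ n := by
    refine (natDegree_sub_le_of_le ((natDegree_C_mul_le _ _).trans
      (natDegree_X_mul_derivative_le (φ n))) (natDegree_C_mul_le _ _)).trans ?_
    rw [hφ.natDegree_eq n, max_self]
  rw [integral_mul_FHwDeriv hα (hasDerivAt_eval_uc_mul_uc_inv_pow _ n)
    (by fun_prop (disch := exact uc_ne_zero))]
  simp only [hQ, mul_assoc I, intervalIntegral.integral_const_mul]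
  rw [hφ.integral_eval_mul_mul_uc_inv_pow (intervalIntegrable_FHw hα.le) _ hQdeg, rC]
  simp [mul_coeff_zero]
  ring

end Weight

theorem FH_In_Jn (α β : ℝ) (hα : 0 < α)
    (φ : ℕ → Polynomial ℂ) (hφ : OPS (FHw α β) φ) (n : ℕ) :
    (∫ θ in (0:ℝ)..(2 * Real.pi),
        (φ n).eval (uc θ) * (starRingEnd ℂ) ((starRev (φ n)).eval (uc θ)) * FHw α β θ)
      = rC φ n ∧
    (∫ θ in (0:ℝ)..(2 * Real.pi),
        ((φ n).eval (uc θ) * (starRingEnd ℂ) ((starRev (φ n)).eval (uc θ)) / (1 - uc θ))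
          * FHw α β θ)
      = ((α : ℂ) + (β : ℂ) * Complex.I - (n : ℂ)) * rC φ n / (2 * (α : ℂ)) := by
  have hconj : ∀ θ, (φ n).eval (uc θ) * starRingEnd ℂ ((starRev (φ n)).eval (uc θ))
      = (φ n * φ n).eval (uc θ) * (uc θ)⁻¹ ^ n := fun θ => by
    rw [conj_eval_uc_starRev, hφ.natDegree_eq, eval_mul]
    ring
  have hI : ∫ θ in (0:ℝ)..(2 * Real.pi), (φ n * φ n).eval (uc θ) * (uc θ)⁻¹ ^ n * FHw α β θ
      = rC φ n :=
    hφ.integral_eval_mul_mul_uc_inv_pow (intervalIntegrable_FHw hα.le) _ (hφ.natDegree_eq n).le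
  simp only [hconj]
  refine ⟨hI, ?_⟩
  rw [integral_div_one_sub_uc_mul_FHw hα (by fun_prop (disch := exact uc_ne_zero)), hI,
    hφ.integral_eval_mul_self_mul_FHwDeriv hα]
  have hα' : (α : ℂ) ≠ 0 := by exact_mod_cast hα.ne'
  field_simp
  linear_combination (n * rC φ n) * I_sq
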